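/- arXiv:2503.08142 — 2 statements merged into one kernel-verified Lean document; each statement's English description precedes it below -/
import Mathlib

section
/- Fix a₁, a₂ > 0 and data ỹ ∈ ℝ⁴ with (ỹ₁, ỹ₃) ≠ (0,0), (ỹ₂, ỹ₄) ≠ (0,0), and a₁ỹ₁² + a₂ỹ₃² ≠ a₁ỹ₂² + a₂ỹ₄² (so that α^+ > 0). Then the function g : (0, ∞) → ℝ defined by g(ν) := α^+·(S·ν² + T)/(δ·(ν+1)²) attains its global minimum at a unique point, namely ν = T/S, and the minimum value is g(T/S) = α^+·S·T/(δ·(S+T)). In particular, for ν ∈ (0, ∞) with ν ≠ T/S one has g(ν) > g(T/S). -/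
noncomputable section

/-- δ = (a₁ỹ₁² + a₂ỹ₃²)(a₁ỹ₂² + a₂ỹ₄²). -/
def deltaQ (a₁ a₂ : ℝ) (y : Fin 4 → ℝ) : ℝ :=
  (a₁ * y 0 ^ 2 + a₂ * y 2 ^ 2) * (a₁ * y 1 ^ 2 + a₂ * y 3 ^ 2)

/-- α⁺ = (√(a₁ỹ₁² + a₂ỹ₃²) − √(a₁ỹ₂² + a₂ỹ₄²))². -/
def alphaP (a₁ a₂ : ℝ) (y : Fin 4 → ℝ) : ℝ :=
  (Real.sqrt (a₁ * y 0 ^ 2 + a₂ * y 2 ^ 2) - Real.sqrt (a₁ * y 1 ^ 2 + a₂ * y 3 ^ 2)) ^ 2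

/-- S = (ỹ₁² + ỹ₃²)(a₁ỹ₂² + a₂ỹ₄²). -/
def Sq (a₁ a₂ : ℝ) (y : Fin 4 → ℝ) : ℝ :=
  (y 0 ^ 2 + y 2 ^ 2) * (a₁ * y 1 ^ 2 + a₂ * y 3 ^ 2)

/-- T = (ỹ₂² + ỹ₄²)(a₁ỹ₁² + a₂ỹ₃²). -/
def Tq (a₁ a₂ : ℝ) (y : Fin 4 → ℝ) : ℝ :=
  (y 1 ^ 2 + y 3 ^ 2) * (a₁ * y 0 ^ 2 + a₂ * y 2 ^ 2)

/-- g(ν) = α⁺(Sν² + T)/(δ(ν+1)²), the unweighted squared error of the better critical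
point as a function of the weight parameter ν. -/
def gfun (a₁ a₂ : ℝ) (y : Fin 4 → ℝ) (ν : ℝ) : ℝ :=
  alphaP a₁ a₂ y * (Sq a₁ a₂ y * ν ^ 2 + Tq a₁ a₂ y) /
    (deltaQ a₁ a₂ y * (ν + 1) ^ 2)

end

/-- on (0,∞), g attains its global minimum at the unique point ν = T/S,
with minimum value α⁺ST/(δ(S+T)). -/
theorem gfun_unique_minimizer (a₁ a₂ : ℝ) (y : Fin 4 → ℝ)
    (ha₁ : 0 < a₁) (ha₂ : 0 < a₂)
    (h13 : ¬(y 0 = 0 ∧ y 2 = 0)) (h24 : ¬(y 1 = 0 ∧ y 3 = 0))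
    (hne : a₁ * y 0 ^ 2 + a₂ * y 2 ^ 2 ≠ a₁ * y 1 ^ 2 + a₂ * y 3 ^ 2) :
    0 < Tq a₁ a₂ y / Sq a₁ a₂ y ∧
    gfun a₁ a₂ y (Tq a₁ a₂ y / Sq a₁ a₂ y) =
      alphaP a₁ a₂ y * Sq a₁ a₂ y * Tq a₁ a₂ y /
        (deltaQ a₁ a₂ y * (Sq a₁ a₂ y + Tq a₁ a₂ y)) ∧
    ∀ ν : ℝ, 0 < ν → ν ≠ Tq a₁ a₂ y / Sq a₁ a₂ y →
      gfun a₁ a₂ y (Tq a₁ a₂ y / Sq a₁ a₂ y) < gfun a₁ a₂ y ν := by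

  -- abbreviations and positivity
  have hy13 : 0 < y 0 ^ 2 + y 2 ^ 2 := by
    rcases not_and_or.mp h13 with h | h <;> positivity
  have hy24 : 0 < y 1 ^ 2 + y 3 ^ 2 := by
    rcases not_and_or.mp h24 with h | h <;> positivity
  have hA : 0 < a₁ * y 0 ^ 2 + a₂ * y 2 ^ 2 := by
    rcases not_and_or.mp h13 with h | h <;> positivity
  have hB : 0 < a₁ * y 1 ^ 2 + a₂ * y 3 ^ 2 := by
    rcases not_and_or.mp h24 with h | h <;> positivity
  have hS : 0 < Sq a₁ a₂ y := mul_pos hy13 hB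
  have hT : 0 < Tq a₁ a₂ y := mul_pos hy24 hA
  have hδ : 0 < deltaQ a₁ a₂ y := mul_pos hA hB
  have hα : 0 < alphaP a₁ a₂ y := by
    have : Real.sqrt (a₁ * y 0 ^ 2 + a₂ * y 2 ^ 2) ≠
        Real.sqrt (a₁ * y 1 ^ 2 + a₂ * y 3 ^ 2) := by
      intro h
      exact hne (by
        have := congrArg (fun t => t ^ 2) h
        simpa [Real.sq_sqrt hA.le, Real.sq_sqrt hB.le] using this)
    have := sub_ne_zero.mpr this
    exact pow_pos (abs_pos.mpr this) 2 |>.trans_le (le_of_eq (sq_abs _))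
  set S := Sq a₁ a₂ y with hSdef
  set T := Tq a₁ a₂ y with hTdef
  set δ := deltaQ a₁ a₂ y with hδdef
  set α := alphaP a₁ a₂ y with hαdef
  have hST : 0 < S + T := by linarith
  have hval : gfun a₁ a₂ y (T / S) = α * S * T / (δ * (S + T)) := by
    unfold gfun
    rw [← hSdef, ← hTdef, ← hδdef, ← hαdef]
    rw [div_eq_div_iff (by positivity) (by positivity)]
    field_simp
    ring
  refine ⟨div_pos hT hS, hval, ?_⟩
  intro ν hν hνne
  rw [hval]
  unfold gfun
  rw [← hSdef, ← hTdef, ← hδdef, ← hαdef]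
  rw [div_lt_div_iff₀ (by positivity) (by positivity)]
  have hkey : 0 < (S * ν - T) ^ 2 := by
    have : S * ν - T ≠ 0 := by
      intro h
      apply hνne
      field_simp
      linarith
    positivity
  nlinarith [mul_pos hα hδ, mul_pos (mul_pos hα hδ) hkey]
end

section
/- Fix a₁, a₂ > 0 and data ỹ ∈ ℝ⁴ with (ỹ₁, ỹ₃) ≠ (0,0) and (ỹ₂, ỹ₄) ≠ (0,0). Then the optimal value of the triangulation problem is bounded above by the weighted approximation: inf{ ∑ᵢ εᵢ² : ε ∈ ℝ⁴, ∑ᵢ qᵢ(ỹᵢ + εᵢ)² = 0 } ≤ α^+·S·T/(δ·(S+T)). -/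
noncomputable section

/-- q = (a₁, −a₁, a₂, −a₂). -/
def qv (a₁ a₂ : ℝ) : Fin 4 → ℝ := ![a₁, -a₁, a₂, -a₂]

end

/-- the optimal value of the triangulation problem is bounded above by the
weighted approximation: inf{∑εᵢ² : ∑qᵢ(ỹᵢ+εᵢ)² = 0} ≤ α⁺ST/(δ(S+T)). -/
theorem geometric_error_upper_bound (a₁ a₂ : ℝ) (y : Fin 4 → ℝ)
    (ha₁ : 0 < a₁) (ha₂ : 0 < a₂)
    (h13 : ¬(y 0 = 0 ∧ y 2 = 0)) (h24 : ¬(y 1 = 0 ∧ y 3 = 0)) :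
    sInf {r : ℝ | ∃ ε : Fin 4 → ℝ,
        (∑ i, qv a₁ a₂ i * (y i + ε i) ^ 2 = 0) ∧ r = ∑ i, ε i ^ 2} ≤
      alphaP a₁ a₂ y * Sq a₁ a₂ y * Tq a₁ a₂ y /
        (deltaQ a₁ a₂ y * (Sq a₁ a₂ y + Tq a₁ a₂ y)) := by
  set A : ℝ := a₁ * y 0 ^ 2 + a₂ * y 2 ^ 2 with hAdef
  set B : ℝ := a₁ * y 1 ^ 2 + a₂ * y 3 ^ 2 with hBdef
  set P : ℝ := y 0 ^ 2 + y 2 ^ 2 with hPdef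
  set Q : ℝ := y 1 ^ 2 + y 3 ^ 2 with hQdef
  have hP : 0 < P := by
    rcases not_and_or.mp h13 with h | h
    · have := sq_abs (0:ℝ); positivity
    · have := sq_abs (0:ℝ); positivity
  have hQ : 0 < Q := by
    rcases not_and_or.mp h24 with h | h
    · have := sq_abs (0:ℝ); positivity
    · have := sq_abs (0:ℝ); positivity
  have hA : 0 < A := by
    rcases not_and_or.mp h13 with h | h
    · have := sq_abs (0:ℝ); positivity
    · have := sq_abs (0:ℝ); positivity
  have hB : 0 < B := by
    rcases not_and_or.mp h24 with h | h
    · have := sq_abs (0:ℝ); positivity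
    · have := sq_abs (0:ℝ); positivity
  set sA : ℝ := Real.sqrt A with hsAdef
  set sB : ℝ := Real.sqrt B with hsBdef
  have hsA : 0 < sA := Real.sqrt_pos.mpr hA
  have hsB : 0 < sB := Real.sqrt_pos.mpr hB
  have hsA2 : sA ^ 2 = A := Real.sq_sqrt hA.le
  have hsB2 : sB ^ 2 = B := Real.sq_sqrt hB.le
  set D : ℝ := P * sB ^ 2 + Q * sA ^ 2 with hDdef
  have hD : 0 < D := by positivity
  set c : ℝ := (sB * P + sA * Q) / D with hcdef
  set ε : Fin 4 → ℝ :=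
    ![(c * sB - 1) * y 0, (c * sA - 1) * y 1, (c * sB - 1) * y 2, (c * sA - 1) * y 3]
    with hεdef
  have hbdd : BddBelow {r : ℝ | ∃ ε : Fin 4 → ℝ,
      (∑ i, qv a₁ a₂ i * (y i + ε i) ^ 2 = 0) ∧ r = ∑ i, ε i ^ 2} := by
    refine ⟨0, fun r hr => ?_⟩
    obtain ⟨e, _, hr⟩ := hr
    rw [hr]
    positivity
  apply csInf_le hbdd
  refine ⟨ε, ?_, ?_⟩
  · show ∑ i, qv a₁ a₂ i * (y i + ε i) ^ 2 = 0
    simp only [Fin.sum_univ_four, qv, hεdef]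
    simp only [Matrix.cons_val_zero, Matrix.cons_val_one, Matrix.head_cons,
      Matrix.cons_val_two, Matrix.tail_cons, Matrix.cons_val_three]
    have e1 : y 0 + (c * sB - 1) * y 0 = c * sB * y 0 := by ring
    have e2 : y 1 + (c * sA - 1) * y 1 = c * sA * y 1 := by ring
    have e3 : y 2 + (c * sB - 1) * y 2 = c * sB * y 2 := by ring
    have e4 : y 3 + (c * sA - 1) * y 3 = c * sA * y 3 := by ring
    rw [e1, e2, e3, e4]
    have : a₁ * (c * sB * y 0) ^ 2 + -a₁ * (c * sA * y 1) ^ 2 +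
        a₂ * (c * sB * y 2) ^ 2 + -a₂ * (c * sA * y 3) ^ 2
        = c ^ 2 * (sB ^ 2 * A - sA ^ 2 * B) := by
      rw [hAdef, hBdef]; ring
    rw [this, hsA2, hsB2]; ring
  · show alphaP a₁ a₂ y * Sq a₁ a₂ y * Tq a₁ a₂ y /
        (deltaQ a₁ a₂ y * (Sq a₁ a₂ y + Tq a₁ a₂ y)) = ∑ i, ε i ^ 2
    have hsum : ∑ i, ε i ^ 2 = (c * sB - 1) ^ 2 * P + (c * sA - 1) ^ 2 * Q := by
      simp only [Fin.sum_univ_four, hεdef]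
      simp only [Matrix.cons_val_zero, Matrix.cons_val_one, Matrix.head_cons,
        Matrix.cons_val_two, Matrix.tail_cons, Matrix.cons_val_three]
      rw [hPdef, hQdef]; ring
    have hα : alphaP a₁ a₂ y = (sA - sB) ^ 2 := rfl
    have hS : Sq a₁ a₂ y = P * B := rfl
    have hT : Tq a₁ a₂ y = Q * A := rfl
    have hδ : deltaQ a₁ a₂ y = A * B := rfl
    rw [hsum, hα, hS, hT, hδ, ← hsA2, ← hsB2, hcdef, hDdef]
    have h1 : P * sB ^ 2 + Q * sA ^ 2 ≠ 0 := by positivity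
    have h2 : sA ^ 2 * sB ^ 2 * (P * sB ^ 2 + Q * sA ^ 2) ≠ 0 := by positivity
    field_simp
    ring
end
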